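/- Let K ⊆ V ⊗ k be a strictly characteristic subspace and e a generator of the one-dimensional subspace l_K := K ∩ φ(K) ∩ ⋯ ∩ φ^{σ₀−1}(K). Then the vectors e, φ(e), φ²(e), …, φ^{2σ₀−1}(e) form a k-basis of V ⊗ k, and the vectors e, φ(e), …, φ^{σ₀−1}(e) form a k-basis of φ^{σ₀−1}(K). -/

import Mathlib

open TensorProduct

noncomputable section

variable (p : ℕ) [Fact p.Prime] (k : Type) [Field k] [CharP k p] [Algebra (ZMod p) k]

/-- The `p`-power (Frobenius) map on `k` as a `ZMod p`-linear map. -/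
def frobLin : k →ₗ[ZMod p] k where
  toFun a := a ^ p
  map_add' a b := add_pow_char a b p
  map_smul' c a := by
    simp only [RingHom.id_apply]
    rw [Algebra.smul_def, Algebra.smul_def, mul_pow, ← map_pow, ZMod.pow_card]

variable (V : Type) [AddCommGroup V] [Module (ZMod p) V]

/-- The Frobenius-semilinear endomorphism `φ = id_V ⊗ (λ ↦ λ^p)` of `k ⊗[𝔽_p] V`. -/
def frobT : (k ⊗[ZMod p] V) →ₛₗ[frobenius k p] (k ⊗[ZMod p] V) where
  toFun := LinearMap.rTensor V (frobLin p k)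
  map_add' := map_add _
  map_smul' c x := by
    induction x using TensorProduct.induction_on with
    | zero => simp
    | tmul a v =>
        simp [smul_tmul', frobLin, frobenius_def, mul_pow]
    | add x y hx hy => simp_all [smul_add]

variable [IsAlgClosed k]

instance : RingHomSurjective (frobenius k p) := ⟨surjective_frobenius k p⟩

/-- The base change to `k` of the bilinear form `B`. -/
abbrev bcForm (B : LinearMap.BilinForm (ZMod p) V) :
    LinearMap.BilinForm k (k ⊗[ZMod p] V) :=
  LinearMap.BilinForm.baseChange k B

variable (σ₀ : ℕ) (B : LinearMap.BilinForm (ZMod p) V)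

/-- `K ⊆ V ⊗ k` is a characteristic subspace: totally isotropic of dimension `σ₀`,
and `K + φ(K)` has dimension `σ₀ + 1`. -/
def IsCharacteristicSub (K : Submodule k (k ⊗[ZMod p] V)) : Prop :=
  (∀ x ∈ K, ∀ y ∈ K, bcForm p k V B x y = 0) ∧
  Module.finrank k K = σ₀ ∧
  Module.finrank k ↥(K ⊔ Submodule.map (frobT p k V) K) = σ₀ + 1

/-- `K` is strictly characteristic if moreover `∑ᵢ φ^i(K) = V ⊗ k`. -/
def IsStrictlyCharacteristicSub (K : Submodule k (k ⊗[ZMod p] V)) : Prop :=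
  IsCharacteristicSub p k V σ₀ B K ∧
  (⨆ i : ℕ, (Submodule.map (frobT p k V))^[i] K) = ⊤

/-- `l_K = K ∩ φ(K) ∩ ⋯ ∩ φ^{σ₀ − 1}(K)`. -/
def lK (K : Submodule k (k ⊗[ZMod p] V)) : Submodule k (k ⊗[ZMod p] V) :=
  ⨅ i : Fin σ₀, (Submodule.map (frobT p k V))^[(i : ℕ)] K

/-- The group `O_K(V)` of isometries of `(V, B)` such that `g ⊗ k` maps `K` to itself. -/
def OK (K : Submodule k (k ⊗[ZMod p] V)) : Subgroup (V ≃ₗ[ZMod p] V) where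
  carrier := {g : V ≃ₗ[ZMod p] V | (∀ x y : V, B (g x) (g y) = B x y) ∧
    Submodule.map (LinearMap.baseChange k (g : V →ₗ[ZMod p] V)) K = K}
  one_mem' := by
    refine ⟨fun x y => rfl, ?_⟩
    rw [LinearEquiv.coe_toLinearMap_one, LinearMap.baseChange_id, Submodule.map_id]
  mul_mem' := by
    rintro g h ⟨hg1, hg2⟩ ⟨hh1, hh2⟩
    refine ⟨fun x y => (hg1 (h x) (h y)).trans (hh1 x y), ?_⟩
    have hco : ((g * h : V ≃ₗ[ZMod p] V) : V →ₗ[ZMod p] V)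
        = (g : V →ₗ[ZMod p] V).comp (h : V →ₗ[ZMod p] V) := rfl
    rw [hco, LinearMap.baseChange_comp, Submodule.map_comp, hh2, hg2]
  inv_mem' := by
    rintro g ⟨hg1, hg2⟩
    constructor
    · intro x y
      have h1 : g (g⁻¹ x) = x := g.apply_symm_apply x
      have h2 : g (g⁻¹ y) = y := g.apply_symm_apply y
      have := hg1 (g⁻¹ x) (g⁻¹ y)
      rw [h1, h2] at this
      exact this.symm
    · conv_lhs => rw [← hg2]
      rw [← Submodule.map_comp, ← LinearMap.baseChange_comp]
      have hco : ((g⁻¹ : V ≃ₗ[ZMod p] V) : V →ₗ[ZMod p] V).comp (g : V →ₗ[ZMod p] V)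
          = LinearMap.id := by
        ext x
        exact g.symm_apply_apply x
      rw [hco, LinearMap.baseChange_id, Submodule.map_id]

end

noncomputable section Aux

open Module Submodule

set_option linter.unusedSectionVars false
set_option linter.unusedVariables false

variable (p : ℕ) [Fact p.Prime] (k : Type) [Field k] [CharP k p] [Algebra (ZMod p) k]
  (V : Type) [AddCommGroup V] [Module (ZMod p) V] [IsAlgClosed k]

lemma frobT_injective : Function.Injective (frobT p k V) := by
  have h1 : Function.Injective (frobLin p k) := by
    intro a b hab
    have hab' : a ^ p = b ^ p := hab
    exact frobenius_inj k p (by rwa [frobenius_def, frobenius_def])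
  exact Module.Flat.rTensor_preserves_injective_linearMap (M := V) (frobLin p k) h1

lemma frobT_surjective : Function.Surjective (frobT p k V) := by
  intro x
  induction x using TensorProduct.induction_on with
  | zero => exact ⟨0, map_zero _⟩
  | tmul a v =>
    obtain ⟨b, hb⟩ := surjective_frobenius k p a
    refine ⟨b ⊗ₜ v, ?_⟩
    show (b ^ p) ⊗ₜ[ZMod p] v = a ⊗ₜ[ZMod p] v
    rw [← frobenius_def, hb]
  | add x y hx hy =>
    obtain ⟨x', rfl⟩ := hx
    obtain ⟨y', rfl⟩ := hy
    exact ⟨x' + y', map_add _ _ _⟩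

lemma finrank_map_frobT (W : Submodule k (k ⊗[ZMod p] V)) :
    finrank k (W.map (frobT p k V)) = finrank k W := by
  have hfrob : Function.Bijective (frobenius k p) :=
    ⟨frobenius_inj k p, surjective_frobenius k p⟩
  have hj : Function.Bijective (fun x : W => (⟨frobT p k V x, mem_map_of_mem x.2⟩ :
      W.map (frobT p k V))) := by
    constructor
    · intro a b hab
      exact Subtype.ext (frobT_injective p k V (congrArg Subtype.val hab))
    · rintro ⟨y, x, hx, rfl⟩
      exact ⟨⟨x, hx⟩, rfl⟩
  have hrank : Module.rank k W = Module.rank k (W.map (frobT p k V)) := by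
    refine rank_eq_of_equiv_equiv (frobenius k p)
      (AddEquiv.ofBijective ({ toFun := (fun x : W => (⟨frobT p k V x, mem_map_of_mem x.2⟩ : W.map (frobT p k V))),
                               map_zero' := Subtype.ext (map_zero _),
                               map_add' := fun a b => Subtype.ext (map_add _ _ _) } : W →+ W.map (frobT p k V)) hj)
      hfrob ?_
    intro r m
    exact Subtype.ext ((frobT p k V).map_smul' r m)
  rw [finrank, finrank, hrank]

section iter

variable {p k V}

lemma iter_map_finrank (i : ℕ) (W : Submodule k (k ⊗[ZMod p] V)) :
    finrank k ((Submodule.map (frobT p k V))^[i] W) = finrank k W := by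
  induction i with
  | zero => rfl
  | succ n ih =>
    rw [Function.iterate_succ_apply', finrank_map_frobT, ih]

lemma iter_map_mem {i : ℕ} {W : Submodule k (k ⊗[ZMod p] V)} {x : k ⊗[ZMod p] V} :
    (⇑(frobT p k V))^[i] x ∈ (Submodule.map (frobT p k V))^[i] W ↔ x ∈ W := by
  induction i with
  | zero => rfl
  | succ n ih =>
    rw [Function.iterate_succ_apply' (⇑(frobT p k V)),
      Function.iterate_succ_apply' (Submodule.map (frobT p k V))]
    constructor
    · rintro ⟨y, hy, hxy⟩
      have : y = (⇑(frobT p k V))^[n] x := frobT_injective p k V hxy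
      exact ih.mp (this ▸ hy)
    · intro hx
      exact mem_map_of_mem (ih.mpr hx)

lemma iter_map_inf (i : ℕ) (A B : Submodule k (k ⊗[ZMod p] V)) :
    (Submodule.map (frobT p k V))^[i] (A ⊓ B)
      = (Submodule.map (frobT p k V))^[i] A ⊓ (Submodule.map (frobT p k V))^[i] B := by
  induction i with
  | zero => rfl
  | succ n ih =>
    rw [Function.iterate_succ_apply', Function.iterate_succ_apply',
      Function.iterate_succ_apply', ih, Submodule.map_inf _ (frobT_injective p k V)]

lemma iter_map_sup (i : ℕ) (A B : Submodule k (k ⊗[ZMod p] V)) :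
    (Submodule.map (frobT p k V))^[i] (A ⊔ B)
      = (Submodule.map (frobT p k V))^[i] A ⊔ (Submodule.map (frobT p k V))^[i] B := by
  induction i with
  | zero => rfl
  | succ n ih =>
    rw [Function.iterate_succ_apply', Function.iterate_succ_apply',
      Function.iterate_succ_apply', ih, Submodule.map_sup]

lemma iter_map_mono (i : ℕ) {A B : Submodule k (k ⊗[ZMod p] V)} (h : A ≤ B) :
    (Submodule.map (frobT p k V))^[i] A ≤ (Submodule.map (frobT p k V))^[i] B := by
  induction i with
  | zero => exact h
  | succ n ih =>
    rw [Function.iterate_succ_apply', Function.iterate_succ_apply']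
    exact Submodule.map_mono ih

lemma iter_map_span (i : ℕ) (s : Set (k ⊗[ZMod p] V)) :
    (Submodule.map (frobT p k V))^[i] (span k s) = span k ((⇑(frobT p k V))^[i] '' s) := by
  induction i with
  | zero => simp
  | succ n ih =>
    rw [Function.iterate_succ_apply' (Submodule.map (frobT p k V)), ih,
      Submodule.map_span, ← Set.image_comp, ← Function.iterate_succ' (⇑(frobT p k V)) n]

lemma iter_map_top (i : ℕ) :
    (Submodule.map (frobT p k V))^[i] (⊤ : Submodule k (k ⊗[ZMod p] V)) = ⊤ := by
  induction i with
  | zero => rfl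
  | succ n ih =>
    rw [Function.iterate_succ_apply', ih, Submodule.map_top, LinearMap.range_eq_top]
    exact frobT_surjective p k V

end iter

end Aux

section Aux2

open Module Submodule LinearMap

set_option linter.unusedSectionVars false
set_option linter.unusedVariables false

variable (p : ℕ) [Fact p.Prime] (k : Type) [Field k] [CharP k p] [Algebra (ZMod p) k]
  (V : Type) [AddCommGroup V] [Module (ZMod p) V] [IsAlgClosed k]

lemma frobT_tmul (a : k) (v : V) :
    frobT p k V (a ⊗ₜ[ZMod p] v) = (a ^ p) ⊗ₜ[ZMod p] v := rfl

variable (B : LinearMap.BilinForm (ZMod p) V)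

lemma bcForm_frobT (x y : k ⊗[ZMod p] V) :
    bcForm p k V B (frobT p k V x) (frobT p k V y) = (bcForm p k V B x y) ^ p := by
  have hp : p ≠ 0 := (Fact.out : p.Prime).ne_zero
  induction x using TensorProduct.induction_on with
  | zero => simp [zero_pow hp]
  | add a b ha hb =>
    simp only [map_add, LinearMap.add_apply, add_pow_char]
    rw [ha, hb]
  | tmul a v =>
    induction y using TensorProduct.induction_on with
    | zero => simp [zero_pow hp]
    | add c d hc hd =>
      simp only [map_add, add_pow_char]
      rw [hc, hd]
    | tmul b w =>
      rw [frobT_tmul, frobT_tmul, LinearMap.BilinForm.baseChange_tmul,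
        LinearMap.BilinForm.baseChange_tmul, Algebra.smul_def, Algebra.smul_def, mul_pow,
        mul_pow, ← map_pow, ZMod.pow_card]

lemma iter_map_isotropic (i : ℕ) {K : Submodule k (k ⊗[ZMod p] V)}
    (hiso : ∀ x ∈ K, ∀ y ∈ K, bcForm p k V B x y = 0) :
    ∀ x ∈ (Submodule.map (frobT p k V))^[i] K, ∀ y ∈ (Submodule.map (frobT p k V))^[i] K,
      bcForm p k V B x y = 0 := by
  have hp : p ≠ 0 := (Fact.out : p.Prime).ne_zero
  induction i with
  | zero => exact hiso
  | succ n ih =>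
    rw [Function.iterate_succ_apply']
    rintro x ⟨x', hx', rfl⟩ y ⟨y', hy', rfl⟩
    rw [bcForm_frobT, ih x' hx' y' hy', zero_pow hp]

lemma bcForm_nondeg [Module.Finite (ZMod p) V] (hnd : B.Nondegenerate) :
    (bcForm p k V B).Nondegenerate := by
  classical
  set b := Module.finBasis (ZMod p) V with hb
  have hdet : (LinearMap.BilinForm.toMatrix b B).det ≠ 0 :=
    (LinearMap.BilinForm.nondegenerate_iff_det_ne_zero b).mp hnd
  refine (LinearMap.BilinForm.nondegenerate_iff_det_ne_zero (b.baseChange k)).mpr ?_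
  have hmat : LinearMap.BilinForm.toMatrix (b.baseChange k) (bcForm p k V B)
      = (LinearMap.BilinForm.toMatrix b B).map (algebraMap (ZMod p) k) := by
    ext i j
    rw [LinearMap.BilinForm.toMatrix_apply, Matrix.map_apply, LinearMap.BilinForm.toMatrix_apply,
      Basis.baseChange_apply, Basis.baseChange_apply, LinearMap.BilinForm.baseChange_tmul,
      mul_one, Algebra.smul_def, mul_one]
  rw [hmat, ← RingHom.mapMatrix_apply, ← RingHom.map_det]
  intro h
  exact hdet ((algebraMap (ZMod p) k).injective (by rw [h, map_zero]))

end Aux2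

section Aux3

open Module Submodule

set_option linter.unusedSectionVars false
set_option linter.unusedVariables false

variable (p : ℕ) [Fact p.Prime] (k : Type) [Field k] [CharP k p] [Algebra (ZMod p) k]
  (V : Type) [AddCommGroup V] [Module (ZMod p) V] [IsAlgClosed k]
  (K : Submodule k (k ⊗[ZMod p] V))

/-- `T_i = K + φK + ⋯ + φ^i K`. -/
def Tch : ℕ → Submodule k (k ⊗[ZMod p] V)
  | 0 => K
  | (i+1) => Tch i ⊔ (Submodule.map (frobT p k V))^[i+1] K

/-- `C_i = K ∩ φK ∩ ⋯ ∩ φ^i K`. -/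
def Cch : ℕ → Submodule k (k ⊗[ZMod p] V)
  | 0 => K
  | (i+1) => Cch i ⊓ (Submodule.map (frobT p k V))^[i+1] K

lemma Tch_zero : Tch p k V K 0 = K := rfl
lemma Tch_succ (i : ℕ) :
    Tch p k V K (i+1) = Tch p k V K i ⊔ (Submodule.map (frobT p k V))^[i+1] K := rfl
lemma Cch_zero : Cch p k V K 0 = K := rfl
lemma Cch_succ (i : ℕ) :
    Cch p k V K (i+1) = Cch p k V K i ⊓ (Submodule.map (frobT p k V))^[i+1] K := rfl

variable {p k V K}

lemma le_Tch : ∀ {i n : ℕ}, i ≤ n → (Submodule.map (frobT p k V))^[i] K ≤ Tch p k V K n := by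
  intro i n
  induction n with
  | zero => intro h; interval_cases i; exact le_rfl
  | succ n ih =>
    intro h
    rcases Nat.lt_or_ge i (n+1) with h' | h'
    · exact le_trans (ih (by omega)) le_sup_left
    · have : i = n + 1 := by omega
      subst this
      exact le_sup_right

lemma Tch_mono {i n : ℕ} (h : i ≤ n) : Tch p k V K i ≤ Tch p k V K n := by
  induction n with
  | zero => interval_cases i; exact le_rfl
  | succ n ih =>
    rcases Nat.lt_or_ge i (n+1) with h' | h'
    · exact le_trans (ih (by omega)) le_sup_left
    · have : i = n + 1 := by omega
      subst this
      exact le_rfl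

lemma Cch_le : ∀ {i n : ℕ}, i ≤ n → Cch p k V K n ≤ (Submodule.map (frobT p k V))^[i] K := by
  intro i n
  induction n with
  | zero => intro h; interval_cases i; exact le_rfl
  | succ n ih =>
    intro h
    rcases Nat.lt_or_ge i (n+1) with h' | h'
    · exact le_trans inf_le_left (ih (by omega))
    · have : i = n + 1 := by omega
      subst this
      exact inf_le_right

lemma mem_Cch {x : k ⊗[ZMod p] V} :
    ∀ {n : ℕ}, (∀ i ≤ n, x ∈ (Submodule.map (frobT p k V))^[i] K) → x ∈ Cch p k V K n := by
  intro n
  induction n with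
  | zero => intro h; exact h 0 le_rfl
  | succ n ih =>
    intro h
    exact ⟨ih (fun i hi => h i (by omega)), h (n+1) le_rfl⟩

lemma lK_eq (σ₀ : ℕ) (hσ : 1 ≤ σ₀) : lK p k V σ₀ K = Cch p k V K (σ₀ - 1) := by
  refine le_antisymm ?_ (le_iInf fun i => Cch_le (by have := i.isLt; omega))
  have main : ∀ m, m ≤ σ₀ - 1 → lK p k V σ₀ K ≤ Cch p k V K m := by
    intro m
    induction m with
    | zero => intro _; exact iInf_le _ (⟨0, by omega⟩ : Fin σ₀)
    | succ n ih =>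
      intro h
      exact le_inf (ih (by omega)) (iInf_le _ (⟨n+1, by omega⟩ : Fin σ₀))
  exact main (σ₀ - 1) le_rfl

variable [Module.Finite (ZMod p) V]
variable {σ₀ : ℕ} {B : LinearMap.BilinForm (ZMod p) V}

section dims

variable (hσ : 1 ≤ σ₀) (hd1 : finrank k K = σ₀)
  (hd2 : finrank k ↥(K ⊔ Submodule.map (frobT p k V) K) = σ₀ + 1)

include hσ hd1 hd2

lemma finrank_K_inf : finrank k ↥(K ⊓ Submodule.map (frobT p k V) K) = σ₀ - 1 := by
  have h := Submodule.finrank_sup_add_finrank_inf_eq K (Submodule.map (frobT p k V) K)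
  rw [hd2, hd1, finrank_map_frobT p k V K, hd1] at h
  omega

lemma finrank_Tch_le (i : ℕ) : finrank k (Tch p k V K i) ≤ σ₀ + i := by
  induction i with
  | zero => rw [Tch_zero, hd1]; omega
  | succ n ih =>
    have hxy := Submodule.finrank_sup_add_finrank_inf_eq (Tch p k V K n)
      ((Submodule.map (frobT p k V))^[n+1] K)
    have hY : finrank k ((Submodule.map (frobT p k V))^[n+1] K) = σ₀ := by
      rw [iter_map_finrank, hd1]
    have hkey : (Submodule.map (frobT p k V))^[n] (K ⊓ Submodule.map (frobT p k V) K)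
        ≤ Tch p k V K n ⊓ (Submodule.map (frobT p k V))^[n+1] K := by
      refine le_inf (le_trans (iter_map_mono n inf_le_left) (le_Tch le_rfl)) ?_
      have h2 : (Submodule.map (frobT p k V))^[n] (Submodule.map (frobT p k V) K)
          = (Submodule.map (frobT p k V))^[n+1] K :=
        (Function.iterate_succ_apply (Submodule.map (frobT p k V)) n K).symm
      exact h2 ▸ iter_map_mono n inf_le_right
    have hinf : σ₀ - 1 ≤ finrank k
        ↥(Tch p k V K n ⊓ (Submodule.map (frobT p k V))^[n+1] K) := by
      have := Submodule.finrank_mono hkey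
      rwa [iter_map_finrank, finrank_K_inf hσ hd1 hd2] at this
    rw [Tch_succ]
    omega

lemma finrank_Cch_ge (i : ℕ) : σ₀ ≤ finrank k (Cch p k V K i) + i := by
  induction i with
  | zero => rw [Cch_zero, hd1]; omega
  | succ n ih =>
    have hxy := Submodule.finrank_sup_add_finrank_inf_eq (Cch p k V K n)
      ((Submodule.map (frobT p k V))^[n+1] K)
    have hY : finrank k ((Submodule.map (frobT p k V))^[n+1] K) = σ₀ := by
      rw [iter_map_finrank, hd1]
    have hsup_le : finrank k
        ↥(Cch p k V K n ⊔ (Submodule.map (frobT p k V))^[n+1] K) ≤ σ₀ + 1 := by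
      have hle : Cch p k V K n ⊔ (Submodule.map (frobT p k V))^[n+1] K
          ≤ (Submodule.map (frobT p k V))^[n] (K ⊔ Submodule.map (frobT p k V) K) := by
        rw [iter_map_sup]
        refine sup_le (le_trans (Cch_le le_rfl) le_sup_left) ?_
        have h2 : (Submodule.map (frobT p k V))^[n] (Submodule.map (frobT p k V) K)
            = (Submodule.map (frobT p k V))^[n+1] K :=
          (Function.iterate_succ_apply (Submodule.map (frobT p k V)) n K).symm
        exact h2 ▸ le_sup_right
      have := Submodule.finrank_mono hle
      rwa [iter_map_finrank, hd2] at this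
    rw [Cch_succ]
    omega

end dims

lemma map_Tch_le (i : ℕ) :
    Submodule.map (frobT p k V) (Tch p k V K i) ≤ Tch p k V K (i+1) := by
  induction i with
  | zero =>
    rw [Tch_zero, Tch_succ, Tch_zero]
    exact le_sup_right
  | succ n ih =>
    rw [Tch_succ, Submodule.map_sup]
    refine sup_le (le_trans ih (Tch_mono (by omega))) ?_
    rw [Tch_succ p k V K (n+1)]
    have h2 : Submodule.map (frobT p k V) ((Submodule.map (frobT p k V))^[n+1] K)
        = (Submodule.map (frobT p k V))^[n+2] K :=
      (Function.iterate_succ_apply' (Submodule.map (frobT p k V)) (n+1) K).symm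
    exact h2 ▸ le_sup_right

lemma Tch_stab {i : ℕ} (h : Tch p k V K (i+1) = Tch p k V K i) (j : ℕ) :
    (Submodule.map (frobT p k V))^[j] K ≤ Tch p k V K i := by
  induction j with
  | zero => exact le_Tch (Nat.zero_le i)
  | succ n ih =>
    rw [Function.iterate_succ_apply']
    exact le_trans (le_trans (Submodule.map_mono ih) (map_Tch_le i)) (le_of_eq h)

variable (hσ : 1 ≤ σ₀) (hd1 : finrank k K = σ₀)
  (hd2 : finrank k ↥(K ⊔ Submodule.map (frobT p k V) K) = σ₀ + 1)
  (hdimE : finrank k (k ⊗[ZMod p] V) = 2 * σ₀)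
  (hsup : (⨆ i : ℕ, (Submodule.map (frobT p k V))^[i] K) = ⊤)

include hσ hd1 hd2 hdimE hsup

lemma Tch_top : Tch p k V K σ₀ = ⊤ := by
  have main : ∀ i, Tch p k V K i = ⊤ ∨ σ₀ + i ≤ finrank k (Tch p k V K i) := by
    intro i
    induction i with
    | zero => right; rw [Tch_zero, hd1]; omega
    | succ n ih =>
      rcases ih with htop | hrank
      · left
        exact eq_top_iff.mpr (htop ▸ Tch_mono (Nat.le_succ n))
      · by_cases heq : Tch p k V K (n+1) = Tch p k V K n
        · left
          rw [heq, eq_top_iff, ← hsup]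
          exact iSup_le (Tch_stab heq)
        · right
          have hlt : Tch p k V K n < Tch p k V K (n+1) :=
            lt_of_le_of_ne (Tch_mono (Nat.le_succ n)) (Ne.symm heq)
          have := Submodule.finrank_lt_finrank_of_lt hlt
          omega
  rcases main σ₀ with htop | hrank
  · exact htop
  · apply Submodule.eq_top_of_finrank_eq
    have hle := Submodule.finrank_le (Tch p k V K σ₀)
    omega

lemma Cch_bot (hiso : ∀ x ∈ K, ∀ y ∈ K, bcForm p k V B x y = 0)
    (hnd : B.Nondegenerate) : Cch p k V K σ₀ = ⊥ := by
  rw [Submodule.eq_bot_iff]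
  intro x hx
  have hbc := bcForm_nondeg p k V B hnd
  have hx' : ∀ i ≤ σ₀, x ∈ (Submodule.map (frobT p k V))^[i] K := fun i hi => Cch_le hi hx
  have claim : ∀ n ≤ σ₀, ∀ y ∈ Tch p k V K n, bcForm p k V B x y = 0 := by
    intro n
    induction n with
    | zero =>
      intro _ y hy
      exact hiso x (hx' 0 (by omega)) y hy
    | succ n ih =>
      intro hn y hy
      rw [Tch_succ, Submodule.mem_sup] at hy
      obtain ⟨a, ha, b, hb, rfl⟩ := hy
      rw [map_add, ih (by omega) a ha,
        iter_map_isotropic p k V B (n+1) hiso x (hx' (n+1) hn) b hb, add_zero]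
  refine hbc.1 x fun y => ?_
  exact claim σ₀ le_rfl y (by rw [Tch_top hσ hd1 hd2 hdimE hsup]; exact Submodule.mem_top)

end Aux3

set_option maxHeartbeats 1000000 in
/-- `e, φ(e), …, φ^(2σ₀-1)(e)` is a basis of `V ⊗ k`, and
`e, φ(e), …, φ^(σ₀-1)(e)` is a basis of `φ^(σ₀-1)(K)`. -/
theorem statement2
    (p : ℕ) [Fact p.Prime] (hodd : Odd p)
    (k : Type) [Field k] [CharP k p] [Algebra (ZMod p) k] [IsAlgClosed k]
    (V : Type) [AddCommGroup V] [Module (ZMod p) V]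
    (σ₀ : ℕ) (hσ : 1 ≤ σ₀)
    (hdim : Module.finrank (ZMod p) V = 2 * σ₀)
    (B : LinearMap.BilinForm (ZMod p) V)
    (hsymm : B.IsSymm) (hnd : B.Nondegenerate)
    (hnn : ∀ W : Submodule (ZMod p) V,
      (∀ x ∈ W, ∀ y ∈ W, B x y = 0) → Module.finrank (ZMod p) W ≠ σ₀)
    (K : Submodule k (k ⊗[ZMod p] V))
    (hK : IsStrictlyCharacteristicSub p k V σ₀ B K)
    (e : k ⊗[ZMod p] V)
    (he : Submodule.span k {e} = lK p k V σ₀ K) :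
    (LinearIndependent k (fun i : Fin (2 * σ₀) => (⇑(frobT p k V))^[(i : ℕ)] e) ∧
      Submodule.span k
        (Set.range fun i : Fin (2 * σ₀) => (⇑(frobT p k V))^[(i : ℕ)] e) = ⊤) ∧
    (LinearIndependent k (fun i : Fin σ₀ => (⇑(frobT p k V))^[(i : ℕ)] e) ∧
      Submodule.span k (Set.range fun i : Fin σ₀ => (⇑(frobT p k V))^[(i : ℕ)] e)
        = (Submodule.map (frobT p k V))^[σ₀ - 1] K) := by
  classical
  obtain ⟨⟨hiso, hd1, hd2⟩, hsup⟩ := hK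
  haveI : Module.Finite (ZMod p) V :=
    Module.finite_of_finrank_pos (by rw [hdim]; omega)
  have hdimE : Module.finrank k (k ⊗[ZMod p] V) = 2 * σ₀ := by
    rw [Module.finrank_baseChange, hdim]
  have he' : Submodule.span k {e} = Cch p k V K (σ₀ - 1) := by rw [he, lK_eq σ₀ hσ]
  have hCrank : 1 ≤ Module.finrank k (Cch p k V K (σ₀ - 1)) := by
    have := finrank_Cch_ge hσ hd1 hd2 (σ₀ - 1)
    omega
  have he0 : e ≠ 0 := by
    rintro rfl
    rw [Submodule.span_zero_singleton] at he'
    rw [← he'] at hCrank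
    simp at hCrank
  have heK : ∀ i ≤ σ₀ - 1, e ∈ (Submodule.map (frobT p k V))^[i] K := by
    intro i hi
    exact Cch_le hi (by rw [← he']; exact Submodule.mem_span_singleton_self e)
  have hiter : ∀ j m : ℕ, j ≤ m → m ≤ j + σ₀ - 1 →
      (⇑(frobT p k V))^[j] e ∈ (Submodule.map (frobT p k V))^[m] K := by
    intro j m hjm hm
    have h1 : e ∈ (Submodule.map (frobT p k V))^[m - j] K := heK _ (by omega)
    have h2 : (⇑(frobT p k V))^[j] e ∈ (Submodule.map (frobT p k V))^[j]
        ((Submodule.map (frobT p k V))^[m - j] K) := iter_map_mem.mpr h1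
    have h3 : (Submodule.map (frobT p k V))^[j] ((Submodule.map (frobT p k V))^[m - j] K)
        = (Submodule.map (frobT p k V))^[m] K := by
      rw [← Function.iterate_add_apply]
      congr 1
      omega
    rwa [h3] at h2
  have hCbot : Cch p k V K σ₀ = ⊥ := Cch_bot hσ hd1 hd2 hdimE hsup hiso hnd
  have hfrobinj := frobT_injective p k V
  have indep : ∀ n ≤ σ₀, LinearIndependent k (fun i : Fin n => (⇑(frobT p k V))^[(i:ℕ)] e) := by
    intro n
    induction n with
    | zero => intro _; exact linearIndependent_empty_type
    | succ n ih =>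
      intro hn
      have heq : (fun i : Fin (n+1) => (⇑(frobT p k V))^[(i:ℕ)] e)
          = Fin.snoc (fun i : Fin n => (⇑(frobT p k V))^[(i:ℕ)] e)
            ((⇑(frobT p k V))^[n] e) := by
        funext i
        refine Fin.lastCases ?_ (fun j => ?_) i
        · simp
        · simp
      rw [heq, linearIndependent_fin_snoc]
      refine ⟨ih (by omega), ?_⟩
      intro hmem
      have hφe : frobT p k V e ∈ K := by
        rcases Nat.eq_zero_or_pos n with rfl | hpos
        · simp at hmem
          exact absurd hmem he0
        · have hsub : Submodule.span k (Set.range fun i : Fin n => (⇑(frobT p k V))^[(i:ℕ)] e)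
              ≤ (Submodule.map (frobT p k V))^[n-1] K := by
            rw [Submodule.span_le]
            rintro _ ⟨i, rfl⟩
            exact hiter i (n-1) (by have := i.isLt; omega) (by have := i.isLt; omega)
          have hn1 : (⇑(frobT p k V))^[n] e ∈ (Submodule.map (frobT p k V))^[n-1] K :=
            hsub hmem
          have hstep : (⇑(frobT p k V))^[n] e
              = (⇑(frobT p k V))^[n-1] (frobT p k V e) := by
            rw [← Function.iterate_succ_apply]
            congr 1
            omega
          rw [hstep] at hn1
          exact iter_map_mem.mp hn1
      have hφeC : frobT p k V e ∈ Cch p k V K σ₀ := by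
        apply mem_Cch
        intro i hi
        rcases Nat.eq_zero_or_pos i with rfl | hpos
        · exact hφe
        · have := hiter 1 i hpos (by omega)
          rwa [Function.iterate_one] at this
      rw [hCbot, Submodule.mem_bot] at hφeC
      exact he0 (hfrobinj (by rw [hφeC, map_zero]))
  have indepσ : LinearIndependent k (fun i : Fin σ₀ => (⇑(frobT p k V))^[(i:ℕ)] e) :=
    indep σ₀ le_rfl
  have claimA : Submodule.span k (Set.range fun i : Fin σ₀ => (⇑(frobT p k V))^[(i:ℕ)] e)
      = (Submodule.map (frobT p k V))^[σ₀ - 1] K := by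
    have hle : Submodule.span k (Set.range fun i : Fin σ₀ => (⇑(frobT p k V))^[(i:ℕ)] e)
        ≤ (Submodule.map (frobT p k V))^[σ₀ - 1] K := by
      rw [Submodule.span_le]
      rintro _ ⟨i, rfl⟩
      exact hiter i (σ₀-1) (by have := i.isLt; omega) (by have := i.isLt; omega)
    refine Submodule.eq_of_le_of_finrank_le hle ?_
    rw [iter_map_finrank, hd1, finrank_span_eq_card indepσ, Fintype.card_fin]
  have hspan_top : Submodule.span k
      (Set.range fun i : Fin (2*σ₀) => (⇑(frobT p k V))^[(i:ℕ)] e) = ⊤ := by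
    set S := Submodule.span k (Set.range fun i : Fin (2*σ₀) => (⇑(frobT p k V))^[(i:ℕ)] e)
      with hS
    have hgen : ∀ j ≤ σ₀, (Submodule.map (frobT p k V))^[j + (σ₀ - 1)] K ≤ S := by
      intro j hj
      rw [Function.iterate_add_apply, ← claimA, iter_map_span, Submodule.span_le]
      rintro _ ⟨_, ⟨i, rfl⟩, rfl⟩
      apply Submodule.subset_span
      refine Set.mem_range.mpr ⟨⟨j + (i:ℕ), by have := i.isLt; omega⟩, ?_⟩
      exact Function.iterate_add_apply _ j (i:ℕ) e
    have hTle : ∀ n ≤ σ₀, (Submodule.map (frobT p k V))^[σ₀-1] (Tch p k V K n) ≤ S := by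
      intro n
      induction n with
      | zero =>
        intro _
        rw [Tch_zero]
        simpa using hgen 0 (by omega)
      | succ n ih =>
        intro hn
        rw [Tch_succ, iter_map_sup]
        refine sup_le (ih (by omega)) ?_
        rw [← Function.iterate_add_apply]
        have harith : σ₀ - 1 + (n + 1) = (n + 1) + (σ₀ - 1) := by omega
        rw [harith]
        exact hgen (n+1) hn
    have htop : (Submodule.map (frobT p k V))^[σ₀-1] (Tch p k V K σ₀) = ⊤ := by
      rw [Tch_top hσ hd1 hd2 hdimE hsup, iter_map_top]
    exact eq_top_iff.mpr (htop ▸ hTle σ₀ le_rfl)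
  have card_eq : Fintype.card (Fin (2*σ₀)) = Module.finrank k (k ⊗[ZMod p] V) := by
    rw [Fintype.card_fin, hdimE]
  have indep2σ : LinearIndependent k (fun i : Fin (2*σ₀) => (⇑(frobT p k V))^[(i:ℕ)] e) :=
    linearIndependent_of_top_le_span_of_card_eq_finrank (le_of_eq hspan_top.symm) card_eq
  exact ⟨⟨indep2σ, hspan_top⟩, indepσ, claimA⟩
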